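/- Let M be a divisible abelian group and let M̃ be the set of sequences (g_k)_{k≥1} in ∏_{k≥1} M such that whenever k = n·m, we have g_m = n·g_k. Then M̃ is a subgroup of the product ∏ M, and the projection (g_k) ↦ g₁ from M̃ to M is a surjective group homomorphism. -/
import Mathlib


/-- For a divisible abelian group `M`, the set `M̃` of compatible sequences
(`g m = n • g k` whenever `k = n * m`) is a subgroup of `∏_{k ≥ 1} M`, and the
projection `(g_k) ↦ g₁` is a surjective group homomorphism `M̃ → M`. -/
theorem profinite_cover_subgroup_and_projection
    (M : Type*) [AddCommGroup M]
    (hdiv : ∀ (m : M) (n : ℕ), 0 < n → ∃ x : M, n • x = m) :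
    ∃ S : AddSubgroup (ℕ+ → M),
      (∀ g : ℕ+ → M, g ∈ S ↔ ∀ n m k : ℕ+, k = n * m → g m = (n : ℕ) • g k) ∧
      Function.Surjective (fun g : S => (g : ℕ+ → M) 1) ∧
      ∀ g h : S, ((g + h : S) : ℕ+ → M) 1 = (g : ℕ+ → M) 1 + (h : ℕ+ → M) 1 := by
  refine ⟨{ carrier := {g | ∀ n m k : ℕ+, k = n * m → g m = (n : ℕ) • g k}
            zero_mem' := by intro n m k hk; simp
            add_mem' := by
              intro g h hg hh n m k hk
              simp only [Pi.add_apply, hg n m k hk, hh n m k hk, smul_add]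
            neg_mem' := by
              intro g hg n m k hk
              simp only [Pi.neg_apply, hg n m k hk, smul_neg] },
        fun g => Iff.rfl, ?_, fun g h => rfl⟩
  intro m
  -- build a "factorial tower" y with y 0 = m and (n+1) • y (n+1) = y n
  obtain ⟨y, hy0, hy⟩ : ∃ y : ℕ → M, y 0 = m ∧ ∀ n, (n + 1) • y (n + 1) = y n := by
    choose f hf using fun (a : M) (n : ℕ) => hdiv a (n + 1) n.succ_pos
    exact ⟨fun n => Nat.rec m (fun n yn => f yn n) n, rfl, fun n => hf _ n⟩
  -- key: y a = (b! / a!) • y b for a ≤ b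
  have key : ∀ b a : ℕ, a ≤ b → y a = (b.factorial / a.factorial) • y b := by
    intro b
    induction b with
    | zero => intro a ha; interval_cases a; simp
    | succ b ih =>
      intro a ha
      rcases Nat.lt_or_ge a (b + 1) with h | h
      · have ha' : a ≤ b := Nat.lt_succ_iff.mp h
        have hdvd : a.factorial ∣ b.factorial := Nat.factorial_dvd_factorial ha'
        rw [ih a ha', ← hy b, smul_smul]
        congr 1
        rw [Nat.factorial_succ, Nat.mul_div_assoc _ hdvd, Nat.mul_comm]
      · have : a = b + 1 := le_antisymm ha h
        subst this
        simp [Nat.div_self (Nat.factorial_pos _)]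
  refine ⟨⟨fun k => ((k : ℕ).factorial / (k : ℕ)) • y (k : ℕ), ?_⟩, ?_⟩
  · intro n mm k hk
    have hc : (k : ℕ) = (n : ℕ) * (mm : ℕ) := by rw [hk]; exact PNat.mul_coe n mm
    set a := (mm : ℕ) with hadef
    set c := (k : ℕ) with hcdef
    have apos : 0 < a := mm.pos
    have cpos : 0 < c := k.pos
    have npos : 0 < (n : ℕ) := n.pos
    have hac : a ≤ c := by
      calc a = 1 * a := (one_mul a).symm
        _ ≤ (n : ℕ) * a := Nat.mul_le_mul_right a npos
        _ = c := hc.symm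
    have h1 : a ∣ a.factorial := Nat.dvd_factorial apos le_rfl
    have h2 : a.factorial ∣ c.factorial := Nat.factorial_dvd_factorial hac
    have h3 : c ∣ c.factorial := Nat.dvd_factorial cpos le_rfl
    have e1 : a.factorial / a * (c.factorial / a.factorial) = c.factorial / a := by
      rw [Nat.mul_comm, ← Nat.mul_div_assoc _ h1, Nat.div_mul_cancel h2]
    have e2 : (n : ℕ) * (c.factorial / c) = c.factorial / a := by
      rw [← Nat.mul_div_assoc _ h3, hc, Nat.mul_div_mul_left _ _ npos]
    simp only
    rw [key c a hac, smul_smul, e1, smul_smul, e2]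
  · have hy1 : y 1 = m := by
      have := hy 0
      simpa [hy0] using this
    simp [hy1]
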